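/- arXiv:1510.07312 — 6 statements merged into one kernel-verified Lean document; each statement's English description precedes it below -/
import Mathlib

section
/- If x = (x_1,…,x_k) and y = (y_1,…,y_k) are two non-decreasing sequences of non-negative real numbers and z = (z_1,…,z_k) is a rearrangement (permutation) of y, then the product x_1^{z_1}·x_2^{z_2}⋯x_k^{z_k} is at most x_1^{y_1}·x_2^{y_2}⋯x_k^{y_k}, where 0^0 is interpreted as 1. -/
/-! For positive bases, `∏ xᵢ ^ yᵢ = exp (∑ yᵢ log xᵢ)` and the claim is the rearrangement
inequality for the similarly ordered families `log ∘ x` and `y`. Zero bases are handled by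
shifting `x` to `x + ε` and letting `ε → 0⁺`: since the exponents are non-negative, every
`t ↦ t ^ yᵢ` is continuous on `ℝ`, including at `0` where `0 ^ 0 = 1`. -/

open Filter Topology

variable {ι : Type*} [Fintype ι] {x y : ι → ℝ}

theorem Monovary.prod_rpow_comp_perm_le_prod_rpow_of_pos (hx : ∀ i, 0 < x i)
    (hxy : Monovary x y) (σ : Equiv.Perm ι) :
    ∏ i, x i ^ y (σ i) ≤ ∏ i, x i ^ y i := by
  have hlog : Monovary (fun i ↦ Real.log (x i)) y := fun _ _ h ↦
    Real.log_le_log (hx _) (hxy h)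
  simp only [Real.rpow_def_of_pos (hx _), ← Real.exp_sum]
  exact Real.exp_le_exp.2 (hlog.sum_mul_comp_perm_le_sum_mul (σ := σ))

theorem Monovary.prod_rpow_comp_perm_le_prod_rpow (hx : ∀ i, 0 ≤ x i) (hy : ∀ i, 0 ≤ y i)
    (hxy : Monovary x y) (σ : Equiv.Perm ι) :
    ∏ i, x i ^ y (σ i) ≤ ∏ i, x i ^ y i := by
  have hcont : ∀ w : ι → ℝ, (∀ i, 0 ≤ w i) →
      Tendsto (fun ε ↦ ∏ i, (x i + ε) ^ w i) (𝓝[>] 0) (𝓝 (∏ i, x i ^ w i)) := by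
    intro w hw
    have : Continuous fun ε ↦ ∏ i, (x i + ε) ^ w i :=
      continuous_finsetProd _ fun i _ ↦
        (Real.continuous_rpow_const (hw i)).comp (continuous_const.add continuous_id)
    simpa using (this.tendsto 0).mono_left nhdsWithin_le_nhds
  refine le_of_tendsto_of_tendsto (hcont _ fun i ↦ hy (σ i)) (hcont y hy) ?_
  filter_upwards [self_mem_nhdsWithin] with ε (hε : 0 < ε)
  exact Monovary.prod_rpow_comp_perm_le_prod_rpow_of_pos (fun i ↦ by linarith [hx i])
    (fun _ _ h ↦ by simpa using hxy h) σ

theorem stmt_3 (k : ℕ) (x y z : Fin k → ℝ)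
    (hx0 : ∀ i, 0 ≤ x i) (hy0 : ∀ i, 0 ≤ y i)
    (hxmono : Monotone x) (hymono : Monotone y)
    (π : Equiv.Perm (Fin k)) (hz : z = y ∘ π) :
    ∏ i, (x i) ^ (z i) ≤ ∏ i, (x i) ^ (y i) := by
  subst hz
  exact (hxmono.monovary hymono).prod_rpow_comp_perm_le_prod_rpow hx0 hy0 π
end

section
/- Let f : 𝔖 → ℝ be supported on permutations of length at most N₀, extended linearly, and for a permutation σ of length n and pattern τ of length m ≤ n let p(τ,σ) = Λ(τ,σ)/C(n,m), where Λ(τ,σ) counts the m-element index subsets of [n] inducing τ in σ. Then for every N ≥ N₀, max over σ ∈ 𝔖_{N+1} of p(f,σ) is at most max over σ ∈ 𝔖_N of p(f,σ). -/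
open Finset

/-- Number of occurrences of the pattern `τ` in `σ`: the number of strictly
increasing index choices inducing the pattern `τ` (equivalently, the number of
`m`-element subsets of `[n]` inducing `τ`). -/
noncomputable def occurrences {m n : ℕ} (τ : Equiv.Perm (Fin m)) (σ : Equiv.Perm (Fin n)) : ℕ :=
  Nat.card {e : Fin m → Fin n // StrictMono e ∧ ∀ i j : Fin m, τ i < τ j ↔ σ (e i) < σ (e j)}

/-- Pattern density `p(τ,σ)` (equal to `0` when `m > n`, since then `C(n,m) = 0`). -/
noncomputable def density {m n : ℕ} (τ : Equiv.Perm (Fin m)) (σ : Equiv.Perm (Fin n)) : ℝ :=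
  (occurrences τ σ : ℝ) / (Nat.choose n m : ℝ)

/-!
Deleting the `k`-th entry of `σ ∈ 𝔖_{N+1}` and standardising gives `σ ∖ k ∈ 𝔖_N`. An
occurrence of `τ ∈ 𝔖_m` in `σ ∖ k` is the same as an occurrence of `τ` in `σ` avoiding
position `k`, and each occurrence in `σ` avoids exactly `N + 1 - m` positions. Together with
`C(N, m) (N + 1) = C(N + 1, m) (N + 1 - m)` this makes `p(τ, σ)` the average of the
`p(τ, σ ∖ k)` over `k`, for `m ≤ N`. By linearity the same holds for `p(f, ·)`, and an
average is at most a maximum.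
-/

namespace Equiv.Perm

/-- `σ.deletePoint k` is the pattern of `σ` on the positions other than `k`. -/
noncomputable def deletePoint {n : ℕ} (σ : Perm (Fin (n + 1))) (k : Fin (n + 1)) :
    Perm (Fin n) :=
  removeNone ((finSuccEquiv' k).symm.trans (σ.trans (finSuccEquiv' (σ k))))

variable {n : ℕ} (σ : Perm (Fin (n + 1))) (k : Fin (n + 1))

theorem succAbove_deletePoint_apply (i : Fin n) :
    (σ k).succAbove (σ.deletePoint k i) = σ (k.succAbove i) := by
  have hne : σ (k.succAbove i) ≠ σ k := fun h => Fin.succAbove_ne k i (σ.injective h)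
  obtain ⟨j, hj⟩ := Fin.exists_succAbove_eq hne
  have hsome :
      ((finSuccEquiv' k).symm.trans (σ.trans (finSuccEquiv' (σ k)))) (some i) = some j := by
    simp only [Equiv.trans_apply, finSuccEquiv'_symm_some, ← hj, finSuccEquiv'_succAbove]
  have hdel : σ.deletePoint k i = j :=
    Option.some_injective _ ((removeNone_some _ ⟨j, hsome⟩).trans hsome)
  rw [hdel, hj]

theorem deletePoint_lt_deletePoint_iff (i j : Fin n) :
    σ.deletePoint k i < σ.deletePoint k j ↔ σ (k.succAbove i) < σ (k.succAbove j) := by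
  rw [← succAbove_deletePoint_apply, ← succAbove_deletePoint_apply,
    Fin.succAbove_lt_succAbove_iff]

end Equiv.Perm

open Equiv.Perm

open Classical in
noncomputable def occurrenceSet {m n : ℕ} (τ : Equiv.Perm (Fin m)) (σ : Equiv.Perm (Fin n)) :
    Finset (Fin m → Fin n) :=
  {e | StrictMono e ∧ ∀ i j : Fin m, τ i < τ j ↔ σ (e i) < σ (e j)}

theorem mem_occurrenceSet {m n : ℕ} {τ : Equiv.Perm (Fin m)} {σ : Equiv.Perm (Fin n)}
    {e : Fin m → Fin n} :
    e ∈ occurrenceSet τ σ ↔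
      StrictMono e ∧ ∀ i j : Fin m, τ i < τ j ↔ σ (e i) < σ (e j) := by
  simp [occurrenceSet]

theorem occurrences_eq_card_occurrenceSet {m n : ℕ} (τ : Equiv.Perm (Fin m))
    (σ : Equiv.Perm (Fin n)) : occurrences τ σ = #(occurrenceSet τ σ) := by
  classical
  rw [occurrences, Nat.card_eq_fintype_card, Fintype.card_subtype, occurrenceSet]

theorem card_filter_notMem_range {m n : ℕ} {e : Fin m → Fin n} (he : Function.Injective e) :
    #{k | k ∉ Set.range e} = n - m := by
  classical
  have hcompl : ({k | k ∉ Set.range e} : Finset (Fin n)) = (univ.image e)ᶜ := by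
    ext k
    simp [eq_comm]
  rw [hcompl, card_compl, card_image_of_injective _ he, card_univ, Fintype.card_fin,
    Fintype.card_fin]

open Classical in
/-- Composing with `k.succAbove` identifies occurrences in `σ.deletePoint k` with the occurrences
in `σ` that avoid position `k`. -/
theorem occurrences_deletePoint {m n : ℕ} (τ : Equiv.Perm (Fin m))
    (σ : Equiv.Perm (Fin (n + 1))) (k : Fin (n + 1)) :
    occurrences τ (σ.deletePoint k) = #{e ∈ occurrenceSet τ σ | k ∉ Set.range e} := by
  rw [occurrences_eq_card_occurrenceSet]
  apply card_bij (fun e _ => k.succAbove ∘ e)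
  · intro e he
    rw [mem_occurrenceSet] at he
    refine mem_filter.2 ⟨mem_occurrenceSet.2 ⟨(Fin.strictMono_succAbove k).comp he.1,
      fun i j => ?_⟩, ?_⟩
    · rw [he.2 i j, deletePoint_lt_deletePoint_iff, Function.comp_apply, Function.comp_apply]
    · rintro ⟨i, hi⟩
      exact Fin.succAbove_ne k (e i) hi
  · intro e₁ _ e₂ _ h
    exact funext fun i => (Fin.strictMono_succAbove k).injective (congrFun h i)
  · intro e he
    obtain ⟨he, hk⟩ := mem_filter.1 he
    obtain ⟨hmono, hpat⟩ := mem_occurrenceSet.1 he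
    choose e' he' using fun i => Fin.exists_succAbove_eq fun h => hk ⟨i, h⟩
    refine ⟨e', mem_occurrenceSet.2 ⟨fun i j hij => ?_, fun i j => ?_⟩, funext he'⟩
    · rw [← (Fin.succAbove_lt_succAbove_iff (p := k)), he', he']
      exact hmono hij
    · rw [hpat i j, deletePoint_lt_deletePoint_iff, he', he']

theorem sum_occurrences_deletePoint {m n : ℕ} (τ : Equiv.Perm (Fin m))
    (σ : Equiv.Perm (Fin (n + 1))) :
    ∑ k, occurrences τ (σ.deletePoint k) = (n + 1 - m) * occurrences τ σ := by
  classical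
  calc ∑ k, occurrences τ (σ.deletePoint k)
      = ∑ k, #((occurrenceSet τ σ).bipartiteAbove (fun k e => k ∉ Set.range e) k) :=
        sum_congr rfl fun k _ => occurrences_deletePoint τ σ k
    _ = ∑ e ∈ occurrenceSet τ σ, #(univ.bipartiteBelow (fun k e => k ∉ Set.range e) e) :=
        sum_card_bipartiteAbove_eq_sum_card_bipartiteBelow _
    _ = ∑ _e ∈ occurrenceSet τ σ, (n + 1 - m) :=
        sum_congr rfl fun e he => card_filter_notMem_range (mem_occurrenceSet.1 he).1.injective
    _ = (n + 1 - m) * occurrences τ σ := by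
        rw [sum_const, smul_eq_mul, occurrences_eq_card_occurrenceSet, mul_comm]

theorem density_eq_sum_density_deletePoint_div {m n : ℕ} (hm : m ≤ n) (τ : Equiv.Perm (Fin m))
    (σ : Equiv.Perm (Fin (n + 1))) :
    density τ σ = (∑ k, density τ (σ.deletePoint k)) / (n + 1) := by
  have hchoose : (n.choose m : ℝ) ≠ 0 := Nat.cast_ne_zero.2 (Nat.choose_pos hm).ne'
  have hchoose' : ((n + 1).choose m : ℝ) ≠ 0 :=
    Nat.cast_ne_zero.2 (Nat.choose_pos (hm.trans n.le_succ)).ne'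
  have hid : (n.choose m : ℝ) * (n + 1) = ((n + 1).choose m : ℝ) * (n + 1 - m : ℕ) := by
    exact_mod_cast Nat.choose_mul_succ_eq n m
  simp only [density, ← sum_div, ← Nat.cast_sum, sum_occurrences_deletePoint, Nat.cast_mul]
  field_simp
  linear_combination (occurrences τ σ : ℝ) * hid

theorem linearCombination_density_eq_sum_deletePoint_div {K n : ℕ} (c : Fin K → ℝ)
    {m : Fin K → ℕ} (τ : ∀ i, Equiv.Perm (Fin (m i))) (hm : ∀ i, m i ≤ n)
    (σ : Equiv.Perm (Fin (n + 1))) :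
    ∑ i, c i * density (τ i) σ =
      (∑ k, ∑ i, c i * density (τ i) (σ.deletePoint k)) / (n + 1) := by
  simp only [density_eq_sum_density_deletePoint_div (hm _), mul_div_assoc', mul_sum,
    ← sum_div, sum_comm (γ := Fin (n + 1))]

theorem sum_comp_div_le_sup' {α : Type*} [Fintype α] [Nonempty α] {n : ℕ} (f : α → ℝ)
    (g : Fin (n + 1) → α) : (∑ k, f (g k)) / (n + 1) ≤ univ.sup' univ_nonempty f := by
  rw [div_le_iff₀ (by positivity)]
  calc ∑ k, f (g k) ≤ ∑ _k : Fin (n + 1), univ.sup' univ_nonempty f :=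
        sum_le_sum fun k _ => le_sup' f (mem_univ _)
    _ = univ.sup' univ_nonempty f * (n + 1) := by simp [mul_comm]

theorem stmt_5 (N₀ : ℕ) (K : ℕ) (c : Fin K → ℝ) (m : Fin K → ℕ)
    (τ : ∀ i : Fin K, Equiv.Perm (Fin (m i))) (hm : ∀ i, m i ≤ N₀)
    (N : ℕ) (hN : N₀ ≤ N) :
    (Finset.univ : Finset (Equiv.Perm (Fin (N + 1)))).sup'
        Finset.univ_nonempty (fun σ => ∑ i, c i * density (τ i) σ) ≤
      (Finset.univ : Finset (Equiv.Perm (Fin N))).sup'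
        Finset.univ_nonempty (fun σ => ∑ i, c i * density (τ i) σ) := by
  refine sup'_le _ _ fun σ _ => ?_
  rw [linearCombination_density_eq_sum_deletePoint_div c τ (fun i => (hm i).trans hN)]
  exact sum_comp_div_le_sup' (fun σ => ∑ i, c i * density (τ i) σ) σ.deletePoint
end

section
/- Let k ≥ ℓ ≥ 3 be integers and N ≥ ℓ. Define q_N(x_1,…,x_N) = ℓ!·Σ_{I ⊆ [N], |I|=ℓ} Π_{i∈I} x_i + Σ_{i=1}^N x_i^k. If x_1 ≤ x_2 ≤ ⋯ ≤ x_N are non-negative reals summing to 1, then q_N(x_1,x_2,…,x_N) ≥ q_{N-1}(x_1+x_2, x_3,…,x_N). -/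
/-!
Write the values as `a ≤ b ≤ s`, with `s` the multiset of the remaining coordinates. Expanding
`e_ℓ` along the first two variables, merging `a` and `b` changes `q_N` by exactly
`ℓ! a b e_{ℓ-2}(s) - ((a + b)^k - a^k - b^k)`. The second term is at most `k a b (a + b)^(k-2)`,
and since `a + b ≤ 2/3` the sequence `k t^(k-2)` decreases in `k`, so it suffices that
`ℓ (a + b)^(ℓ-2) ≤ ℓ! e_{ℓ-2}(s)`. This follows from `a + b ≤ 2b`, `ℓ 2^(ℓ-2) ≤ ℓ!`
and `b^(ℓ-2) ≤ e_{ℓ-2}(s)`, every element of `s` being at least `b`.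
-/

open Finset

/-- The Price polynomial of `Id_ℓ + Rev_k` in `M` variables. -/
noncomputable def pricePoly (ℓ k M : ℕ) (x : Fin M → ℝ) : ℝ :=
  (Nat.factorial ℓ : ℝ) *
      ∑ I ∈ (Finset.univ : Finset (Fin M)).powersetCard ℓ, ∏ i ∈ I, x i +
    ∑ i, (x i) ^ k

namespace Multiset

lemma esymm_cons_succ {R : Type*} [CommSemiring R] (a : R) (s : Multiset R) (j : ℕ) :
    (a ::ₘ s).esymm (j + 1) = a * s.esymm j + s.esymm (j + 1) := by
  simp only [esymm, powersetCard_cons, map_add, sum_add, map_map, Function.comp_def, prod_cons,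
    sum_map_mul_left, add_comm]

lemma pow_le_esymm {s : Multiset ℝ} {b : ℝ} (hb : 0 ≤ b) (hs : ∀ a ∈ s, b ≤ a) {j : ℕ}
    (hj : j ≤ card s) : b ^ j ≤ s.esymm j := by
  obtain ⟨t, ht⟩ : ∃ t, t ∈ s.powersetCard j :=
    card_pos_iff_exists_mem.mp (by rw [card_powersetCard]; exact Nat.choose_pos hj)
  obtain ⟨hts, rfl⟩ := mem_powersetCard.mp ht
  have hbt : ∀ a ∈ t, b ≤ a := fun a ha => hs a (mem_of_le hts ha)
  calc b ^ card t = (t.map fun _ => b).prod := by simp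
    _ ≤ (t.map id).prod := prod_map_le_prod_map₀ _ _ (fun _ _ => hb) hbt
    _ ≤ s.esymm (card t) := by
      rw [map_id]
      refine single_le_sum (fun p hp => ?_) _ (mem_map_of_mem _ ht)
      obtain ⟨u, hu, rfl⟩ := mem_map.mp hp
      exact prod_nonneg fun a ha => hb.trans (hs a (mem_of_le (mem_powersetCard.mp hu).1 ha))

end Multiset

lemma add_pow_le_pow_add_pow_add_mul {a b : ℝ} (ha : 0 ≤ a) (hb : 0 ≤ b) (r : ℕ) :
    (a + b) ^ (r + 2) ≤ a ^ (r + 2) + b ^ (r + 2) + (r + 2) * a * b * (a + b) ^ r := by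
  induction r with
  | zero => norm_num; nlinarith
  | succ r ih =>
    have hpow : a ^ (r + 1) + b ^ (r + 1) ≤ (a + b) ^ (r + 1) :=
      pow_add_pow_le ha hb r.succ_ne_zero
    calc (a + b) ^ (r + 1 + 2) = (a + b) * (a + b) ^ (r + 2) := by ring
      _ ≤ (a + b) * (a ^ (r + 2) + b ^ (r + 2) + (r + 2) * a * b * (a + b) ^ r) := by gcongr
      _ = a ^ (r + 3) + b ^ (r + 3) + a * b * (a ^ (r + 1) + b ^ (r + 1))
          + (r + 2) * a * b * (a + b) ^ (r + 1) := by ring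
      _ ≤ a ^ (r + 3) + b ^ (r + 3) + a * b * (a + b) ^ (r + 1)
          + (r + 2) * a * b * (a + b) ^ (r + 1) := by gcongr
      _ = _ := by push_cast; ring

lemma antitone_mul_pow {t : ℝ} (ht0 : 0 ≤ t) (ht : t ≤ 2 / 3) :
    Antitone fun r : ℕ => ((r : ℝ) + 2) * t ^ r := by
  refine antitone_nat_of_succ_le fun r => ?_
  have hr : (0 : ℝ) ≤ r := r.cast_nonneg
  have hstep : ((r : ℝ) + 3) * t ≤ r + 2 := by nlinarith
  calc ((r + 1 : ℕ) + 2 : ℝ) * t ^ (r + 1) = ((r + 3) * t) * t ^ r := by push_cast; ring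
    _ ≤ (r + 2) * t ^ r := by gcongr

lemma mul_two_pow_le_factorial (j : ℕ) : (j + 2) * 2 ^ j ≤ (j + 2).factorial := by
  have h := @Nat.factorial_mul_pow_le_factorial 1 j
  rw [Nat.factorial_one, one_mul, add_comm 1 j] at h
  rw [Nat.factorial_succ (j + 1)]
  exact Nat.mul_le_mul_left _ h

lemma add_pow_sub_pow_sub_pow_le_mul_esymm {a b : ℝ} {s : Multiset ℝ} {j r : ℕ}
    (ha : 0 ≤ a) (hab : a ≤ b) (hbs : ∀ c ∈ s, b ≤ c) (hjs : j ≤ Multiset.card s)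
    (hjr : j ≤ r) (h23 : a + b ≤ 2 / 3) :
    (a + b) ^ (r + 2) - a ^ (r + 2) - b ^ (r + 2) ≤ (j + 2).factorial * (a * b * s.esymm j) := by
  have hb : 0 ≤ b := ha.trans hab
  have key : ((r : ℝ) + 2) * (a + b) ^ r ≤ (j + 2).factorial * s.esymm j :=
    calc ((r : ℝ) + 2) * (a + b) ^ r ≤ (j + 2) * (a + b) ^ j :=
          antitone_mul_pow (by positivity) h23 hjr
      _ ≤ (j + 2) * (2 * b) ^ j := by gcongr; linarith
      _ = ((j + 2) * 2 ^ j : ℕ) * b ^ j := by push_cast; ring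
      _ ≤ (j + 2).factorial * s.esymm j := by
          gcongr
          · exact_mod_cast mul_two_pow_le_factorial j
          · exact Multiset.pow_le_esymm hb hbs hjs
  nlinarith [add_pow_le_pow_add_pow_add_mul ha hb r,
    mul_le_mul_of_nonneg_left key (mul_nonneg ha hb)]

lemma pricePoly_sub_pricePoly_merge (j k m : ℕ) (x : Fin (m + 3) → ℝ) :
    pricePoly (j + 2) k (m + 3) x
      - pricePoly (j + 2) k (m + 2) (fun i => if (i : ℕ) = 0 then x 0 + x 1 else x i.succ)
    = (j + 2).factorial *
        (x 0 * x 1 * (↑(List.ofFn fun i : Fin (m + 1) => x i.succ.succ) : Multiset ℝ).esymm j)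
      - ((x 0 + x 1) ^ k - x 0 ^ k - x 1 ^ k) := by
  simp only [pricePoly, ← Finset.esymm_map_val, Fin.univ_val_map, List.ofFn_succ,
    Fin.sum_univ_succ, ← Multiset.cons_coe, Multiset.esymm_cons_succ, Fin.val_succ,
    Nat.add_eq_zero_iff, one_ne_zero, and_false, if_false, Fin.val_zero, if_true,
    Fin.succ_zero_eq_one]
  ring

theorem stmt_8 (ℓ k n : ℕ) (hℓ : 3 ≤ ℓ) (hk : ℓ ≤ k) (hN : ℓ ≤ n + 1)
    (x : Fin (n + 1) → ℝ) (hmono : Monotone x) (hx0 : ∀ i, 0 ≤ x i)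
    (hsum : (∑ i, x i) = 1) :
    pricePoly ℓ k (n + 1) x ≥
      pricePoly ℓ k n (fun i => if (i : ℕ) = 0 then x 0 + x 1 else x i.succ) := by
  obtain ⟨m, rfl⟩ : ∃ m, n = m + 2 := ⟨n - 2, by omega⟩
  obtain ⟨j, rfl⟩ : ∃ j, ℓ = j + 2 := ⟨ℓ - 2, by omega⟩
  obtain ⟨r, rfl⟩ : ∃ r, k = r + 2 := ⟨k - 2, by omega⟩
  set s : Multiset ℝ := ↑(List.ofFn fun i : Fin (m + 1) => x i.succ.succ) with hs
  have hcard : Multiset.card s = m + 1 := by simp [hs]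
  have hbs : ∀ c ∈ s, x 1 ≤ c := by
    simp only [hs, Multiset.mem_coe, List.mem_ofFn, forall_exists_index]
    rintro _ i rfl
    exact hmono (by simp [Fin.le_def])
  have hsum_split : x 0 + x 1 + s.sum = 1 := by
    rw [hs, Multiset.sum_coe, List.sum_ofFn, ← hsum, Fin.sum_univ_succ x,
      Fin.sum_univ_succ fun i : Fin (m + 2) => x i.succ, add_assoc]
    rfl
  -- `1 ≥ x 0 + 2 x 1 ≥ 3 (x 0 + x 1) / 2`, as `s` is nonempty with all elements `≥ x 1`
  have h23 : x 0 + x 1 ≤ 2 / 3 := by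
    have hbound := Multiset.card_nsmul_le_sum hbs
    rw [hcard, nsmul_eq_mul, Nat.cast_succ] at hbound
    nlinarith [hmono (Fin.zero_le 1), hx0 1, (m.cast_nonneg : (0 : ℝ) ≤ m)]
  rw [ge_iff_le, ← sub_nonneg, pricePoly_sub_pricePoly_merge]
  linarith [add_pow_sub_pow_sub_pow_le_mul_esymm (hx0 0) (hmono (Fin.zero_le 1)) hbs
    (by omega : j ≤ Multiset.card s) (by omega : j ≤ r) h23]
end

section
/- Let k ≥ ℓ ≥ 3 and N ≥ ℓ. The minimum over the standard simplex {x ∈ ℝ^N : x_i ≥ 0, Σx_i = 1} of ℓ!·Σ_{|I|=ℓ, I⊆[N]} Π_{i∈I} x_i + Σ_i x_i^k equals 1/(ℓ-1)^{k-1}. -/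
/-!
Let `p = ∑ xᵢ²`. Weighted Chebyshev (weights `xᵢ`; `xᵢ` and `xᵢⁿ` similarly ordered) gives
`∑ xᵢᵏ ≥ p^(k-1)`, which settles the case `p ≥ 1/(ℓ-1)`. Otherwise, the identity
`e_{m+1} = (m+2) e_{m+2} + ∑ xᵢ² e_m(x without xᵢ)` and weighted Chebyshev again (now `xᵢ` and
`e_m(x without xᵢ)` are oppositely ordered) give `(m+2) e_{m+2} ≥ (1 - (m+1) p) e_{m+1}`, so
`ℓ! e_ℓ ≥ ∏_{i=1}^{ℓ-1} (1 - i p) ≥ (ℓ-1)^{-(ℓ-2)} (1 - (ℓ-1) p)`,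
and Bernoulli's inequality for `p^(k-1)` finishes.
-/
open Finset

lemma MonovaryOn.sum_mul_sum_le_sum_mul_sum {ι : Type*} {s : Finset ι} {μ f g : ι → ℝ}
    (hμ : ∀ i ∈ s, 0 ≤ μ i) (hfg : MonovaryOn f g s) :
    (∑ i ∈ s, μ i * f i) * (∑ i ∈ s, μ i * g i) ≤
      (∑ i ∈ s, μ i) * ∑ i ∈ s, μ i * f i * g i := by
  have hsymm : ∑ i ∈ s, ∑ j ∈ s, μ i * μ j * ((f j - f i) * (g j - g i)) =
      2 * ((∑ i ∈ s, μ i) * ∑ i ∈ s, μ i * f i * g i -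
        (∑ i ∈ s, μ i * f i) * (∑ i ∈ s, μ i * g i)) := by
    calc _ = ∑ i ∈ s, ∑ j ∈ s, (μ i * (μ j * f j * g j) + μ i * f i * g i * μ j -
          μ i * f i * (μ j * g j) - μ i * g i * (μ j * f j)) :=
          sum_congr rfl fun i _ => sum_congr rfl fun j _ => by ring
      _ = _ := by
          simp only [sum_sub_distrib, sum_add_distrib, ← sum_mul_sum]
          ring
  have hnonneg : 0 ≤ ∑ i ∈ s, ∑ j ∈ s, μ i * μ j * ((f j - f i) * (g j - g i)) :=
    sum_nonneg fun i hi => sum_nonneg fun j hj =>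
      mul_nonneg (mul_nonneg (hμ i hi) (hμ j hj)) (hfg.sub_mul_sub_nonneg hi hj)
  linarith

lemma AntivaryOn.sum_mul_sum_le_sum_mul_sum {ι : Type*} {s : Finset ι} {μ f g : ι → ℝ}
    (hμ : ∀ i ∈ s, 0 ≤ μ i) (hfg : AntivaryOn f g s) :
    (∑ i ∈ s, μ i) * ∑ i ∈ s, μ i * f i * g i ≤
      (∑ i ∈ s, μ i * f i) * (∑ i ∈ s, μ i * g i) := by
  have := hfg.neg_right.sum_mul_sum_le_sum_mul_sum hμ
  simp only [Pi.neg_apply, mul_neg, sum_neg_distrib] at this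
  linarith

lemma Nat.add_le_pow_succ {n : ℕ} (hn : 1 ≤ n) (d : ℕ) : n + 1 + d ≤ (n + 1) ^ (d + 1) := by
  have hd : d < (n + 1) ^ d := Nat.lt_pow_self (by omega)
  rw [pow_succ]
  nlinarith

lemma one_div_pow_le_prod_add_pow {L K : ℕ} (hL : 2 ≤ L) (hLK : L ≤ K) {p : ℝ}
    (hp : 0 ≤ p) (hLp : L * p ≤ 1) :
    1 / (L : ℝ) ^ K ≤ ∏ i ∈ range L, (1 - (i + 1) * p) + p ^ K := by
  obtain ⟨n, rfl⟩ : ∃ n, L = n + 1 := ⟨L - 1, by omega⟩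
  obtain ⟨d, rfl⟩ : ∃ d, K = n + 1 + d := ⟨K - (n + 1), by omega⟩
  push_cast at hLp ⊢
  set q : ℝ := 1 / (n + 1) with hq_def
  have hq : 0 < q := by positivity
  have hqn : (n + 1) * q = 1 := by rw [hq_def]; field_simp
  rw [← one_div_pow]
  have hprod : q ^ n * (1 - (n + 1) * p) ≤ ∏ i ∈ range (n + 1), (1 - (i + 1) * p) := by
    have hconst : q ^ n = ∏ _i ∈ range n, q := by simp
    rw [prod_range_succ, hconst]
    refine mul_le_mul_of_nonneg_right (prod_le_prod (fun _ _ => hq.le) fun i hi => ?_)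
      (by linarith)
    have hi : (i : ℝ) + 1 ≤ n := by exact_mod_cast mem_range.1 hi
    nlinarith
  have hweight : ((n + 1 + d : ℕ) : ℝ) * q ^ (n + 1 + d) ≤ q ^ n := by
    have hK : ((n + 1 + d : ℕ) : ℝ) ≤ ((n : ℝ) + 1) ^ (d + 1) := by
      exact_mod_cast Nat.add_le_pow_succ (by omega) d
    calc ((n + 1 + d : ℕ) : ℝ) * q ^ (n + 1 + d)
        = q ^ n * (((n + 1 + d : ℕ) : ℝ) * q ^ (d + 1)) := by ring
      _ ≤ q ^ n * (((n : ℝ) + 1) ^ (d + 1) * q ^ (d + 1)) := by gcongr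
      _ = q ^ n := by rw [← mul_pow, hqn, one_pow, mul_one]
  -- Bernoulli's inequality at `(n + 1) * p = 1 + ((n + 1) * p - 1)`
  have hbern : 1 - (n + 1 + d : ℕ) * (1 - (n + 1) * p) ≤ ((n + 1) * p) ^ (n + 1 + d) := by
    have := one_add_mul_le_pow (a := (n + 1) * p - 1) (by nlinarith) (n + 1 + d)
    rw [add_sub_cancel] at this
    push_cast at this ⊢
    linarith
  have hp_eq : q ^ (n + 1 + d) * ((n + 1) * p) ^ (n + 1 + d) = p ^ (n + 1 + d) := by
    rw [← mul_pow, ← mul_assoc, mul_comm q, hqn, one_mul]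
  calc q ^ (n + 1 + d)
      = q ^ (n + 1 + d) * (1 - (n + 1 + d : ℕ) * (1 - (n + 1) * p)) +
          (n + 1 + d : ℕ) * q ^ (n + 1 + d) * (1 - (n + 1) * p) := by ring
    _ ≤ q ^ (n + 1 + d) * ((n + 1) * p) ^ (n + 1 + d) + q ^ n * (1 - (n + 1) * p) :=
        add_le_add (mul_le_mul_of_nonneg_left hbern (by positivity))
          (mul_le_mul_of_nonneg_right hweight (by linarith))
    _ ≤ ∏ i ∈ range (n + 1), (1 - (i + 1) * p) + p ^ (n + 1 + d) := by
        rw [hp_eq, add_comm]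
        exact add_le_add hprod le_rfl

namespace Finset

section CommSemiring

variable {α R : Type*} [CommSemiring R] {s : Finset α} {w : α → R}

def esymm (s : Finset α) (w : α → R) (m : ℕ) : R :=
  ∑ I ∈ s.powersetCard m, ∏ i ∈ I, w i

@[simp] lemma esymm_zero (s : Finset α) (w : α → R) : s.esymm w 0 = 1 := by
  simp [esymm]

lemma esymm_one (s : Finset α) (w : α → R) : s.esymm w 1 = ∑ i ∈ s, w i := by
  simp [esymm, powersetCard_one]

@[simp] lemma esymm_empty_succ (w : α → R) (m : ℕ) :
    (∅ : Finset α).esymm w (m + 1) = 0 := by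
  rw [esymm, powersetCard_eq_empty.2 (by simp), sum_empty]

lemma esymm_eq_zero_of_card_lt {t : Finset α} {m : ℕ} (hw : ∀ i ∈ s, i ∉ t → w i = 0)
    (ht : #t < m) : s.esymm w m = 0 :=
  sum_eq_zero fun I hI => by
    obtain ⟨i, hiI, hit⟩ := exists_mem_notMem_of_card_lt_card
      (ht.trans_eq (mem_powersetCard.1 hI).2.symm)
    exact prod_eq_zero hiI (hw i ((mem_powersetCard.1 hI).1 hiI) hit)

variable [DecidableEq α]

lemma esymm_insert {a : α} (ha : a ∉ s) (w : α → R) (m : ℕ) :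
    (insert a s).esymm w (m + 1) = s.esymm w (m + 1) + w a * s.esymm w m := by
  rw [esymm, powersetCard_succ_insert ha, sum_union, sum_image, esymm, esymm, mul_sum]
  · congr 1
    refine sum_congr rfl fun I hI => prod_insert fun haI => ha ?_
    exact (mem_powersetCard.1 hI).1 haI
  · intro I hI J hJ hIJ
    have haI : a ∉ I := fun h => ha ((mem_powersetCard.1 hI).1 h)
    have haJ : a ∉ J := fun h => ha ((mem_powersetCard.1 hJ).1 h)
    simpa [erase_insert haI, erase_insert haJ] using congrArg (erase · a) hIJ
  · refine disjoint_left.2 fun J hJ hJ' => ?_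
    obtain ⟨I, -, rfl⟩ := mem_image.1 hJ'
    exact ha ((mem_powersetCard.1 hJ).1 (mem_insert_self a I))

lemma esymm_of_mem {a : α} (ha : a ∈ s) (w : α → R) (m : ℕ) :
    s.esymm w (m + 1) = (s.erase a).esymm w (m + 1) + w a * (s.erase a).esymm w m := by
  rw [← esymm_insert (notMem_erase a s), insert_erase ha]

lemma sum_mul_esymm_erase (s : Finset α) (w : α → R) (m : ℕ) :
    ∑ i ∈ s, w i * (s.erase i).esymm w m = (m + 1) * s.esymm w (m + 1) := by
  induction s using Finset.induction_on generalizing m with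
  | empty => simp
  | insert a s ha ih =>
    have herase : ∀ i ∈ s, (insert a s).erase i = insert a (s.erase i) := fun i hi =>
      erase_insert_of_ne (ne_of_mem_of_not_mem hi ha).symm
    rw [sum_insert ha, erase_insert ha, sum_congr rfl fun i hi => by rw [herase i hi],
      esymm_insert ha]
    cases m with
    | zero =>
      simp only [esymm_zero, mul_one, Nat.cast_zero, zero_add, esymm_one, one_mul]
      ring
    | succ m =>
      simp only [esymm_insert (fun h => ha (mem_of_mem_erase h)), mul_add, sum_add_distrib,
        ih, mul_left_comm _ (w a), ← mul_sum]
      push_cast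
      ring

lemma sum_mul_esymm (s : Finset α) (w : α → R) (m : ℕ) :
    (∑ i ∈ s, w i) * s.esymm w (m + 1) =
      (m + 2) * s.esymm w (m + 2) + ∑ i ∈ s, w i ^ 2 * (s.erase i).esymm w m := by
  rw [sum_mul, sum_congr rfl fun i hi => by rw [esymm_of_mem hi, mul_add, ← mul_assoc, ← sq],
    sum_add_distrib, sum_mul_esymm_erase]
  push_cast
  ring

end CommSemiring

lemma esymm_erase_sub_esymm_erase {α R : Type*} [CommRing R] [DecidableEq α] {s : Finset α}
    {a b : α} (ha : a ∈ s) (hb : b ∈ s) (hab : a ≠ b) (w : α → R) (m : ℕ) :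
    (s.erase a).esymm w (m + 1) - (s.erase b).esymm w (m + 1) =
      (w b - w a) * ((s.erase a).erase b).esymm w m := by
  rw [esymm_of_mem (mem_erase.2 ⟨hab.symm, hb⟩), esymm_of_mem (mem_erase.2 ⟨hab, ha⟩),
    erase_right_comm]
  ring

end Finset


namespace Finset

variable {α : Type*} {s : Finset α} {w : α → ℝ}

lemma esymm_nonneg (hw : ∀ i ∈ s, 0 ≤ w i) (m : ℕ) : 0 ≤ s.esymm w m :=
  sum_nonneg fun _ hI => prod_nonneg fun i hi => hw i ((mem_powersetCard.1 hI).1 hi)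

lemma sum_sq_pow_le_sum_pow (hw : ∀ i ∈ s, 0 ≤ w i) (hsum : ∑ i ∈ s, w i = 1) (n : ℕ) :
    (∑ i ∈ s, w i ^ 2) ^ n ≤ ∑ i ∈ s, w i ^ (n + 1) := by
  induction n with
  | zero => simp [hsum]
  | succ n ih =>
    have hcheb := ((monovaryOn_self w s).pow_right₀ hw n).sum_mul_sum_le_sum_mul_sum hw
    simp only [Pi.pow_apply, hsum, one_mul, ← sq, ← pow_succ'] at hcheb
    calc (∑ i ∈ s, w i ^ 2) ^ (n + 1) = (∑ i ∈ s, w i ^ 2) * (∑ i ∈ s, w i ^ 2) ^ n :=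
          pow_succ' _ _
      _ ≤ (∑ i ∈ s, w i ^ 2) * ∑ i ∈ s, w i ^ (n + 1) := by gcongr
      _ ≤ ∑ i ∈ s, w i ^ (n + 1 + 1) := hcheb.trans_eq (sum_congr rfl fun i _ => by ring)

variable [DecidableEq α]

lemma antivaryOn_esymm_erase (hw : ∀ i ∈ s, 0 ≤ w i) (m : ℕ) :
    AntivaryOn w (fun i => (s.erase i).esymm w m) s := by
  cases m with
  | zero =>
    simp only [esymm_zero]
    exact antivaryOn_const_right w 1 s
  | succ m =>
    refine antivaryOn_iff_forall_mul_nonpos.2 fun i hi j hj => ?_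
    rcases eq_or_ne j i with rfl | hji
    · simp
    have hc : 0 ≤ ((s.erase j).erase i).esymm w m :=
      esymm_nonneg (fun k hk => hw k (mem_of_mem_erase (mem_of_mem_erase hk))) m
    rw [esymm_erase_sub_esymm_erase hj hi hji]
    nlinarith [mul_nonneg (sq_nonneg (w j - w i)) hc]

lemma esymm_mul_one_sub_le (hw : ∀ i ∈ s, 0 ≤ w i) (hsum : ∑ i ∈ s, w i = 1) (m : ℕ) :
    s.esymm w (m + 1) * (1 - (m + 1) * ∑ i ∈ s, w i ^ 2) ≤ (m + 2) * s.esymm w (m + 2) := by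
  have hid := sum_mul_esymm s w m
  have hcheb := (antivaryOn_esymm_erase hw m).sum_mul_sum_le_sum_mul_sum hw
  simp only [hsum, one_mul, ← sq, sum_mul_esymm_erase] at hid hcheb
  linarith

lemma prod_one_sub_mul_le_factorial_mul_esymm (hw : ∀ i ∈ s, 0 ≤ w i)
    (hsum : ∑ i ∈ s, w i = 1) (j : ℕ) (hj : j * ∑ i ∈ s, w i ^ 2 ≤ 1) :
    ∏ i ∈ range j, (1 - (i + 1) * ∑ i ∈ s, w i ^ 2) ≤
      (j + 1).factorial * s.esymm w (j + 1) := by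
  set p := ∑ i ∈ s, w i ^ 2
  induction j with
  | zero => simp [esymm_one, hsum]
  | succ j ih =>
    have hp : 0 ≤ p := sum_nonneg fun i _ => sq_nonneg (w i)
    push_cast at hj
    calc ∏ i ∈ range (j + 1), (1 - (i + 1) * p)
        = (∏ i ∈ range j, (1 - (i + 1) * p)) * (1 - (j + 1) * p) := prod_range_succ _ _
      _ ≤ (j + 1).factorial * s.esymm w (j + 1) * (1 - (j + 1) * p) :=
          mul_le_mul_of_nonneg_right (ih (by nlinarith)) (by linarith)
      _ ≤ (j + 1).factorial * ((j + 2) * s.esymm w (j + 2)) := by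
          rw [mul_assoc]
          exact mul_le_mul_of_nonneg_left (esymm_mul_one_sub_le hw hsum j) (by positivity)
      _ = (j + 1 + 1).factorial * s.esymm w (j + 1 + 1) := by
          rw [Nat.factorial_succ (j + 1)]
          push_cast
          ring

lemma one_div_pow_le_factorial_mul_esymm_add_sum_pow {L K : ℕ} (hL : 2 ≤ L) (hLK : L ≤ K)
    (hw : ∀ i ∈ s, 0 ≤ w i) (hsum : ∑ i ∈ s, w i = 1) :
    1 / (L : ℝ) ^ K ≤ (L + 1).factorial * s.esymm w (L + 1) + ∑ i ∈ s, w i ^ (K + 1) := by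
  set p := ∑ i ∈ s, w i ^ 2
  have hp : 0 ≤ p := sum_nonneg fun i _ => sq_nonneg (w i)
  have hpow : p ^ K ≤ ∑ i ∈ s, w i ^ (K + 1) := sum_sq_pow_le_sum_pow hw hsum K
  rcases le_or_gt (L * p) 1 with hLp | hLp
  · calc 1 / (L : ℝ) ^ K ≤ ∏ i ∈ range L, (1 - (i + 1) * p) + p ^ K :=
          one_div_pow_le_prod_add_pow hL hLK hp hLp
      _ ≤ _ := add_le_add (prod_one_sub_mul_le_factorial_mul_esymm hw hsum L hLp) hpow
  · have hLpos : (0 : ℝ) < L := by positivity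
    have hqp : 1 / (L : ℝ) ^ K ≤ p ^ K := by
      rw [← one_div_pow]
      exact pow_le_pow_left₀ (by positivity) (by rw [div_le_iff₀ hLpos]; linarith) K
    have := mul_nonneg (Nat.cast_nonneg (α := ℝ) (L + 1).factorial) (esymm_nonneg hw (L + 1))
    linarith

end Finset

theorem stmt_9 (ℓ k N : ℕ) (hℓ : 3 ≤ ℓ) (hk : ℓ ≤ k) (hN : ℓ ≤ N) :
    IsLeast {s : ℝ | ∃ x : Fin N → ℝ, (∀ i, 0 ≤ x i) ∧ (∑ i, x i) = 1 ∧
        s = (Nat.factorial ℓ : ℝ) *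
              ∑ I ∈ (Finset.univ : Finset (Fin N)).powersetCard ℓ, ∏ i ∈ I, x i +
            ∑ i, (x i) ^ k}
      (1 / ((ℓ : ℝ) - 1) ^ (k - 1)) := by
  obtain ⟨L, rfl⟩ : ∃ L, ℓ = L + 1 := ⟨ℓ - 1, by omega⟩
  obtain ⟨K, rfl⟩ : ∃ K, k = K + 1 := ⟨k - 1, by omega⟩
  have hL : (0 : ℝ) < L := by norm_cast; omega
  rw [Nat.cast_add_one, add_sub_cancel_right, Nat.add_sub_cancel]
  refine ⟨?_, ?_⟩
  · obtain ⟨S, -, hS⟩ := exists_subset_card_eq (s := (univ : Finset (Fin N))) (n := L)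
      (by rw [card_univ, Fintype.card_fin]; omega)
    have hsparse : univ.esymm (fun i => if i ∈ S then (L : ℝ)⁻¹ else 0) (L + 1) = 0 :=
      esymm_eq_zero_of_card_lt (fun i _ hi => if_neg hi) (by omega)
    refine ⟨fun i => if i ∈ S then (L : ℝ)⁻¹ else 0, fun i => by positivity, ?_, ?_⟩
    · simp [hS, hL.ne']
    · rw [← esymm, hsparse]
      simp only [one_div, mul_zero, ite_pow, inv_pow, ne_eq, Nat.add_eq_zero_iff, one_ne_zero,
        and_false, not_false_eq_true, zero_pow, sum_ite_mem, univ_inter, sum_const, hS,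
        nsmul_eq_mul, zero_add]
      field_simp
      ring
  · rintro _ ⟨x, hx, hsum, rfl⟩
    exact one_div_pow_le_factorial_mul_esymm_add_sum_pow (by omega) (by omega)
      (fun i _ => hx i) hsum
end

section
/- For every integer k ≥ 3, if x_1, x_2, x_3 are non-negative reals with x_1 ≤ x_2 ≤ x_3 and x_1 + x_2 + x_3 = 1, then 6·x_1·x_2·x_3 + x_1^k + x_2^k ≥ (x_1 + x_2)^k. -/
/-!
Write `s = x₁ + x₂ ≤ 2/3`. Since `x₃ ≥ 1/3`, it suffices to show `s ^ n ≤ x₁ ^ n + x₂ ^ n + 2 x₁ x₂`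
for `n ≥ 3`. For `n = 3` the defect `s³ - x₁³ - x₂³ = 3 x₁ x₂ s` is at most `2 x₁ x₂`; the defect
`dₙ = sⁿ - x₁ⁿ - x₂ⁿ` satisfies `dₙ₊₁ = s dₙ + x₁ x₂ (x₁ⁿ⁻¹ + x₂ⁿ⁻¹)`, and the last factor is at most
`s² ≤ 4/9`, so `dₙ₊₁ ≤ 2 x₁ x₂ (2/3 + 2/9) ≤ 2 x₁ x₂`.
-/

lemma mul_pow_add_mul_pow_le {a b : ℝ} (ha : 0 ≤ a) (hb : 0 ≤ b) (hab : a + b ≤ 2 / 3)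
    {n : ℕ} (hn : 3 ≤ n) : b * a ^ n + a * b ^ n ≤ 4 / 9 * (a * b) := by
  have ha3 : a ^ n ≤ a ^ 3 := pow_le_pow_of_le_one ha (by linarith) hn
  have hb3 : b ^ n ≤ b ^ 3 := pow_le_pow_of_le_one hb (by linarith) hn
  have hsq : a ^ 2 + b ^ 2 ≤ 4 / 9 := by nlinarith [mul_nonneg ha hb]
  calc b * a ^ n + a * b ^ n ≤ b * a ^ 3 + a * b ^ 3 := by gcongr
    _ = a * b * (a ^ 2 + b ^ 2) := by ring
    _ ≤ a * b * (4 / 9) := by gcongr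
    _ = 4 / 9 * (a * b) := by ring

lemma add_pow_le_pow_add_pow_add_two_mul {a b : ℝ} (ha : 0 ≤ a) (hb : 0 ≤ b)
    (hab : a + b ≤ 2 / 3) {n : ℕ} (hn : 3 ≤ n) :
    (a + b) ^ n ≤ a ^ n + b ^ n + 2 * a * b := by
  have hab0 : 0 ≤ a * b := mul_nonneg ha hb
  induction n, hn using Nat.le_induction with
  | base => nlinarith [mul_nonneg hab0 (show 0 ≤ 2 / 3 - (a + b) by linarith)]
  | succ n hn ih =>
    have hcross := mul_pow_add_mul_pow_le ha hb hab hn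
    calc (a + b) ^ (n + 1) = (a + b) * (a + b) ^ n := by ring
      _ ≤ (a + b) * (a ^ n + b ^ n + 2 * a * b) := by gcongr
      _ = a ^ (n + 1) + b ^ (n + 1) + (b * a ^ n + a * b ^ n) + 2 * (a * b) * (a + b) := by ring
      _ ≤ a ^ (n + 1) + b ^ (n + 1) + 2 * a * b := by
        nlinarith [mul_le_mul_of_nonneg_left hab hab0]

theorem stmt_11 (k : ℕ) (hk : 3 ≤ k) (x₁ x₂ x₃ : ℝ) (h0 : 0 ≤ x₁)
    (h12 : x₁ ≤ x₂) (h23 : x₂ ≤ x₃) (hsum : x₁ + x₂ + x₃ = 1) :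
    6 * x₁ * x₂ * x₃ + x₁ ^ k + x₂ ^ k ≥ (x₁ + x₂) ^ k := by
  have h2 : 0 ≤ x₂ := h0.trans h12
  have hx₃ : 1 / 3 ≤ x₃ := by linarith
  have hmerge := add_pow_le_pow_add_pow_add_two_mul h0 h2 (by linarith) hk
  nlinarith [mul_le_mul_of_nonneg_left hx₃ (mul_nonneg h0 h2)]
end

section
/- Let k ≥ 1 and let x_2, x_3, …, x_N be non-negative reals with x_2 ≤ x_3 ≤ ⋯ ≤ x_N (N ≥ k+1). For a set I of indices write x_I^s for the product Π x_{i_j}^{s_j}. Given a non-decreasing sequence of positive integer exponents ℓ_1 ≤ ℓ_2 ≤ ⋯ ≤ ℓ_k, we have Σ_{I ⊆ {2,…,N}, |I|=k} Π_{j=1}^k x_{I_j}^{ℓ_j} ≥ (1/k)·x_{N-k+1}^{ℓ_1}·Σ_{I ⊆ {2,…,N}, |I|=k-1} Π_{j=1}^{k-1} x_{I_j}^{ℓ_{j+1}}, where I_j denotes the j-th smallest element of I. -/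
/-!
Put `c = N - k + 1`. Every `(k-1)`-set `t` misses some `m ∈ {c, …, N}`, a block of `k` indices.
Adding `m` to `t` multiplies the monomial by at least `x_c ^ ℓ₁`: the monomial with `m` put in
front (exponent `ℓ₁`) is dominated by the one with `m` in its sorted place, since moving `m` past
smaller indices only swaps exponents so that larger values get larger exponents. The map
`t ↦ t ∪ {m}` is at most `k`-to-one, because `t` is recovered from its image `s` by erasing `m ∈ s`.
-/

open Finset

variable {α : Type*}

-- `rankProd x ℓ l = ∏ j, x l[j] ^ ℓ j`; on `s.sort` this is the paper's monomial indexed by `s`.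
def rankProd (x : α → ℝ) : (ℕ → ℕ) → List α → ℝ
  | _, [] => 1
  | ℓ, a :: l => x a ^ ℓ 0 * rankProd x (fun j => ℓ (j + 1)) l

lemma rankProd_ofFn (x : α → ℝ) {k : ℕ} (ℓ : ℕ → ℕ) (e : Fin k → α) :
    rankProd x ℓ (List.ofFn e) = ∏ j : Fin k, x (e j) ^ ℓ j := by
  induction k generalizing ℓ with
  | zero => simp [rankProd]
  | succ k ih => simp [List.ofFn_succ, rankProd, ih, Fin.prod_univ_succ]

lemma rankProd_nonneg {x : α → ℝ} (ℓ : ℕ → ℕ) {l : List α} (hx : ∀ a ∈ l, 0 ≤ x a) :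
    0 ≤ rankProd x ℓ l := by
  induction l generalizing ℓ with
  | nil => simp [rankProd]
  | cons a l ih =>
    simp only [List.mem_cons, forall_eq_or_imp] at hx
    exact mul_nonneg (pow_nonneg hx.1 _) (ih _ hx.2)

lemma pow_mul_pow_le_pow_mul_pow {a b : ℝ} {m n : ℕ} (hb : 0 ≤ b) (hba : b ≤ a) (hmn : m ≤ n) :
    a ^ m * b ^ n ≤ b ^ m * a ^ n := by
  obtain ⟨d, rfl⟩ := Nat.exists_eq_add_of_le hmn
  calc a ^ m * b ^ (m + d) = (a ^ m * b ^ m) * b ^ d := by ring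
    _ ≤ (a ^ m * b ^ m) * a ^ d := by
        have ha : 0 ≤ a := hb.trans hba
        gcongr
    _ = b ^ m * a ^ (m + d) := by ring

lemma rankProd_cons_le_rankProd_orderedInsert [LinearOrder α] {x : α → ℝ} {ℓ : ℕ → ℕ}
    (hℓ : Monotone ℓ) {m : α} {l : List α} (hx : ∀ a ∈ l, 0 ≤ x a)
    (hxm : ∀ a ∈ l, a < m → x a ≤ x m) :
    rankProd x ℓ (m :: l) ≤ rankProd x ℓ (l.orderedInsert (· ≤ ·) m) := by
  induction l generalizing ℓ with
  | nil => rfl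
  | cons a l ih =>
    simp only [List.mem_cons, forall_eq_or_imp] at hx hxm
    by_cases hma : m ≤ a
    · rw [List.orderedInsert_cons_of_le _ _ hma]
    rw [List.orderedInsert_of_not_le _ _ hma]
    have hxam := hxm.1 (not_le.1 hma)
    have hrest := rankProd_nonneg (fun j => ℓ (j + 2)) hx.2
    calc rankProd x ℓ (m :: a :: l)
        = x m ^ ℓ 0 * x a ^ ℓ 1 * rankProd x (fun j => ℓ (j + 2)) l := by
          simp only [rankProd]; ring
      _ ≤ x a ^ ℓ 0 * x m ^ ℓ 1 * rankProd x (fun j => ℓ (j + 2)) l :=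
          mul_le_mul_of_nonneg_right (pow_mul_pow_le_pow_mul_pow hx.1 hxam (hℓ zero_le_one)) hrest
      _ = x a ^ ℓ 0 * rankProd x (fun j => ℓ (j + 1)) (m :: l) := by
          simp only [rankProd]; ring
      _ ≤ rankProd x ℓ (a :: l.orderedInsert (· ≤ ·) m) :=
          mul_le_mul_of_nonneg_left (ih (fun _ _ h => hℓ (by omega)) hx.2 hxm.2)
            (pow_nonneg hx.1 _)

lemma Finset.sort_insert_eq_orderedInsert [LinearOrder α] {m : α} {s : Finset α} (hm : m ∉ s) :
    (insert m s).sort = s.sort.orderedInsert (· ≤ ·) m := by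
  refine List.Perm.eq_of_pairwise' (r := (· ≤ ·)) ((insert m s).pairwise_sort _) ?_ ?_
  · exact (s.pairwise_sort _).orderedInsert _ _
  · refine List.Perm.trans ?_ (List.perm_orderedInsert _ _ _).symm
    rw [← Multiset.coe_eq_coe, Finset.sort_eq, Finset.insert_val_of_notMem hm, ← Multiset.cons_coe,
      Finset.sort_eq]

lemma Finset.sum_strictMono_ofFn_eq_sum_powersetCard [LinearOrder α] {M : Type*}
    [AddCommMonoid M] {k : ℕ} {S : Finset α} {E : Finset (Fin k → α)}
    (hE : ∀ e, e ∈ E ↔ StrictMono e ∧ ∀ j, e j ∈ S) (f : List α → M) :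
    ∑ e ∈ E, f (List.ofFn e) = ∑ s ∈ S.powersetCard k, f s.sort := by
  refine sum_bij' (fun e _ => univ.image e)
    (fun s hs => s.orderEmbOfFin (mem_powersetCard.1 hs).2) ?_ ?_ ?_ ?_ ?_
  · intro e he
    obtain ⟨hmono, hS⟩ := (hE e).1 he
    simp [mem_powersetCard, subset_iff, hS, card_image_of_injective _ hmono.injective]
  · intro s hs
    exact (hE _).2 ⟨OrderEmbedding.strictMono _,
      fun j => (mem_powersetCard.1 hs).1 (orderEmbOfFin_mem _ _ j)⟩
  · intro e he
    exact (orderEmbOfFin_unique _ (fun j => mem_image_of_mem e (mem_univ j))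
      ((hE e).1 he).1).symm
  · intro s hs
    exact image_orderEmbOfFin_univ _ _
  · intro e he
    rw [← listMap_orderEmbOfFin_finRange _ (k := k) (by
      rw [card_image_of_injective _ ((hE e).1 he).1.injective, card_fin]),
      ← (orderEmbOfFin_unique _ (fun j => mem_image_of_mem e (mem_univ j))
      ((hE e).1 he).1), List.ofFn_eq_map]

lemma Finset.sum_comp_le_mul_sum {ι κ : Type*} [DecidableEq κ] {s : Finset ι} {t : Finset κ}
    {f : ι → κ} {g : κ → ℝ} {K : ℕ} (hf : ∀ i ∈ s, f i ∈ t)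
    (hfiber : ∀ j ∈ t, #{i ∈ s | f i = j} ≤ K) (hg : ∀ j ∈ t, 0 ≤ g j) :
    ∑ i ∈ s, g (f i) ≤ K * ∑ j ∈ t, g j := by
  have himage : s.image f ⊆ t := fun j hj => by
    obtain ⟨i, hi, rfl⟩ := mem_image.1 hj
    exact hf i hi
  rw [sum_comp, mul_sum]
  calc ∑ j ∈ s.image f, #{i ∈ s | f i = j} • g j
      ≤ ∑ j ∈ s.image f, K * g j := sum_le_sum fun j hj => by
        rw [nsmul_eq_mul]
        exact mul_le_mul_of_nonneg_right (by exact_mod_cast hfiber j (himage hj)) (hg j (himage hj))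
    _ ≤ ∑ j ∈ t, K * g j := sum_le_sum_of_subset_of_nonneg himage fun j hj _ =>
        mul_nonneg (Nat.cast_nonneg _) (hg j hj)

lemma sum_powersetCard_rankProd_le [LinearOrder α] {S R : Finset α} {x : α → ℝ} {ℓ : ℕ → ℕ}
    {a : ℝ} {n : ℕ} (hx : ∀ i ∈ S, 0 ≤ x i) (hxS : MonotoneOn x S) (hℓ : Monotone ℓ)
    (hRS : R ⊆ S) (hR : #R = n + 1) (ha : 0 ≤ a) (haR : ∀ r ∈ R, a ≤ x r) :
    a ^ ℓ 0 * ∑ t ∈ S.powersetCard n, rankProd x (fun j => ℓ (j + 1)) t.sort ≤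
      (n + 1) * ∑ s ∈ S.powersetCard (n + 1), rankProd x ℓ s.sort := by
  classical
  have hfree : ∀ t ∈ S.powersetCard n, ∃ m ∈ R, m ∉ t := fun t ht => by
    by_contra! h
    have := card_le_card (show R ⊆ t from h)
    rw [hR, (mem_powersetCard.1 ht).2] at this
    omega
  have : Nonempty α := (card_pos.1 (by omega : 0 < #R)).to_subtype.map Subtype.val
  choose! m hmR hmt using hfree
  have hinsert : ∀ t ∈ S.powersetCard n, insert (m t) t ∈ S.powersetCard (n + 1) := fun t ht => by
    obtain ⟨htS, htn⟩ := mem_powersetCard.1 ht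
    exact mem_powersetCard.2
      ⟨insert_subset (hRS (hmR t ht)) htS, by rw [card_insert_of_notMem (hmt t ht), htn]⟩
  have hnonneg : ∀ s ∈ S.powersetCard (n + 1), 0 ≤ rankProd x ℓ s.sort := fun s hs =>
    rankProd_nonneg ℓ fun i hi => hx i ((mem_powersetCard.1 hs).1 ((mem_sort _).1 hi))
  have hstep : ∀ t ∈ S.powersetCard n,
      a ^ ℓ 0 * rankProd x (fun j => ℓ (j + 1)) t.sort ≤ rankProd x ℓ (insert (m t) t).sort := by
    intro t ht
    have htS : ∀ i ∈ t.sort, i ∈ S := fun i hi => (mem_powersetCard.1 ht).1 ((mem_sort _).1 hi)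
    rw [sort_insert_eq_orderedInsert (hmt t ht)]
    calc a ^ ℓ 0 * rankProd x (fun j => ℓ (j + 1)) t.sort
        ≤ x (m t) ^ ℓ 0 * rankProd x (fun j => ℓ (j + 1)) t.sort :=
          mul_le_mul_of_nonneg_right (pow_le_pow_left₀ ha (haR _ (hmR t ht)) _)
            (rankProd_nonneg _ fun i hi => hx i (htS i hi))
      _ = rankProd x ℓ (m t :: t.sort) := by rw [rankProd]
      _ ≤ rankProd x ℓ (t.sort.orderedInsert (· ≤ ·) (m t)) :=
          rankProd_cons_le_rankProd_orderedInsert hℓ (fun i hi => hx i (htS i hi))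
            fun i hi him => hxS (htS i hi) (hRS (hmR t ht)) him.le
  have hfiber : ∀ s ∈ S.powersetCard (n + 1),
      #{t ∈ S.powersetCard n | insert (m t) t = s} ≤ n + 1 := by
    intro s hs
    rw [← (mem_powersetCard.1 hs).2]
    refine card_le_card_of_injOn m (fun t ht => ?_) fun t₁ ht₁ t₂ ht₂ h => ?_
    · obtain ⟨_, rfl⟩ := mem_filter.1 ht
      exact mem_insert_self _ _
    · obtain ⟨ht₁, hs₁⟩ := mem_filter.1 ht₁
      obtain ⟨ht₂, hs₂⟩ := mem_filter.1 ht₂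
      rw [← erase_insert (hmt t₁ ht₁), ← erase_insert (hmt t₂ ht₂), hs₁, hs₂, h]
  calc _ ≤ ∑ t ∈ S.powersetCard n, rankProd x ℓ (insert (m t) t).sort :=
        (mul_sum ..).trans_le (sum_le_sum hstep)
    _ ≤ _ := by
        exact_mod_cast sum_comp_le_mul_sum (f := fun t => insert (m t) t)
          (g := fun s => rankProd x ℓ (s.sort (· ≤ ·))) hinsert hfiber hnonneg

theorem stmt_17 (k N : ℕ) (hk : 1 ≤ k) (hN : k + 1 ≤ N)
    (x : Fin (N + 1) → ℝ)
    (hx0 : ∀ i : Fin (N + 1), 2 ≤ (i : ℕ) → 0 ≤ x i)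
    (hmono : ∀ i j : Fin (N + 1), 2 ≤ (i : ℕ) → i ≤ j → x i ≤ x j)
    (ℓ : ℕ → ℕ) (hℓmono : Monotone ℓ) :
    (∑ e ∈ (Finset.univ : Finset (Fin k → Fin (N + 1))).filter
        (fun e => (∀ a b : Fin k, a < b → e a < e b) ∧ ∀ j, 2 ≤ ((e j : Fin (N + 1)) : ℕ)),
      ∏ j : Fin k, x (e j) ^ ℓ ((j : ℕ) + 1)) ≥
      (1 / (k : ℝ)) * x ⟨N - k + 1, by omega⟩ ^ ℓ 1 *
        ∑ e ∈ (Finset.univ : Finset (Fin (k - 1) → Fin (N + 1))).filter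
            (fun e => (∀ a b : Fin (k - 1), a < b → e a < e b) ∧
              ∀ j, 2 ≤ ((e j : Fin (N + 1)) : ℕ)),
          ∏ j : Fin (k - 1), x (e j) ^ ℓ ((j : ℕ) + 2) := by
  obtain ⟨n, rfl⟩ : ∃ n, k = n + 1 := ⟨k - 1, by omega⟩
  rw [Nat.add_sub_cancel]
  set S : Finset (Fin (N + 1)) := {i | 2 ≤ (i : ℕ)}
  set c : Fin (N + 1) := ⟨N - (n + 1) + 1, by omega⟩
  have hsum : ∀ (m : ℕ) (L : ℕ → ℕ),
      ∑ e ∈ (univ : Finset (Fin m → Fin (N + 1))).filter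
        (fun e => (∀ a b : Fin m, a < b → e a < e b) ∧ ∀ j, 2 ≤ ((e j : Fin (N + 1)) : ℕ)),
        ∏ j : Fin m, x (e j) ^ L j = ∑ s ∈ S.powersetCard m, rankProd x L s.sort := by
    intro m L
    simp only [← rankProd_ofFn]
    exact sum_strictMono_ofFn_eq_sum_powersetCard (fun e => by simp [S, StrictMono]) _
  have hc2 : 2 ≤ (c : ℕ) := show 2 ≤ N - (n + 1) + 1 by omega
  have key := sum_powersetCard_rankProd_le (S := S) (R := Ici c) (x := x) (a := x c) (n := n)
    (fun i hi => hx0 i (mem_filter.1 hi).2)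
    (fun i hi j _ hij => hmono i j (mem_filter.1 hi).2 hij)
    (fun _ _ h => hℓmono (Nat.add_le_add_right h 1))
    (fun i hi => mem_filter.2 ⟨mem_univ i, hc2.trans (Fin.le_def.1 (mem_Ici.1 hi))⟩)
    (by rw [Fin.card_Ici]; exact show N + 1 - (N - (n + 1) + 1) = n + 1 by omega)
    (hx0 c hc2)
    (fun r hr => hmono c r hc2 (mem_Ici.1 hr))
  rw [ge_iff_le, hsum (n + 1) (fun j => ℓ (j + 1)), hsum n (fun j => ℓ (j + 2)), one_div, mul_assoc,
    inv_mul_le_iff₀ (by positivity)]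
  exact_mod_cast key
end
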